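/- arXiv:math/0106166 — 3 statements merged into one kernel-verified Lean document; each statement's English description precedes it below -/
import Mathlib

section
/- The margin of a unit-normal separating hyperplane (w, b) for finite nonempty sets P and N, defined as min over x ∈ P ∪ N of |⟨w,x⟩ + b|, is at most half the minimum distance between P and N: margin ≤ (1/2) · min_{p∈P, q∈N} ‖p - q‖. -/
/-! Since ‖w‖ = 1, the affine map x ↦ ⟪w, x⟫ + b is 1-Lipschitz, and between p ∈ P and q ∈ N it
changes sign, so it drops by |f p| + |f q| ≥ 2 · margin over a distance ‖p - q‖. -/

open InnerProductSpace

lemma abs_add_abs_le_norm_sub_of_pos_of_neg {E : Type*} [NormedAddCommGroup E]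
    [InnerProductSpace ℝ E] {w p q : E} {b : ℝ} (hw : ‖w‖ ≤ 1)
    (hp : 0 < ⟪w, p⟫_ℝ + b) (hq : ⟪w, q⟫_ℝ + b < 0) :
    |⟪w, p⟫_ℝ + b| + |⟪w, q⟫_ℝ + b| ≤ ‖p - q‖ := by
  rw [abs_of_pos hp, abs_of_neg hq]
  calc ⟪w, p⟫_ℝ + b + -(⟪w, q⟫_ℝ + b) = ⟪w, p - q⟫_ℝ := by rw [inner_sub_right]; ring
    _ ≤ ‖w‖ * ‖p - q‖ := real_inner_le_norm w (p - q)
    _ ≤ ‖p - q‖ := mul_le_of_le_one_left (norm_nonneg _) hw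

theorem stmt_5 (n : ℕ) [DecidableEq (EuclideanSpace ℝ (Fin n))] (P N : Finset (EuclideanSpace ℝ (Fin n)))
    (hP : P.Nonempty) (hN : N.Nonempty)
    (w : EuclideanSpace ℝ (Fin n)) (b : ℝ) (hw : ‖w‖ = 1)
    (h1 : ∀ x ∈ P, ⟪w, x⟫_ℝ + b > 0) (h2 : ∀ x ∈ N, ⟪w, x⟫_ℝ + b < 0) :
    ((P ∪ N).image (fun x => |⟪w, x⟫_ℝ + b|)).min'
        ((hP.mono Finset.subset_union_left).image _) ≤
      (1 / 2) * ((P ×ˢ N).image (fun pq => ‖pq.1 - pq.2‖)).min'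
        ((hP.product hN).image _) := by
  set margin := ((P ∪ N).image (fun x => |⟪w, x⟫_ℝ + b|)).min'
    ((hP.mono Finset.subset_union_left).image _)
  have margin_le (x) (hx : x ∈ P ∪ N) : margin ≤ |⟪w, x⟫_ℝ + b| :=
    Finset.min'_le _ _ (Finset.mem_image_of_mem _ hx)
  suffices 2 * margin ≤ ((P ×ˢ N).image (fun pq => ‖pq.1 - pq.2‖)).min' _ by linarith
  refine Finset.le_min' _ _ _ fun d hd => ?_
  obtain ⟨⟨p, q⟩, hpq, rfl⟩ := Finset.mem_image.mp hd
  obtain ⟨hp, hq⟩ := Finset.mem_product.mp hpq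
  linarith [abs_add_abs_le_norm_sub_of_pos_of_neg hw.le (h1 p hp) (h2 q hq),
    margin_le p (Finset.mem_union_left _ hp), margin_le q (Finset.mem_union_right _ hq)]
end

section
/- Let P and N be finite nonempty sets in ℝⁿ that are strictly separable. Then the infimum of ‖w‖² over all (w, b) satisfying ⟨w,x⟩ + b ≥ 1 on P and ⟨w,x⟩ + b ≤ -1 on N is attained. -/
/-!
Dividing a strict separator `(w, b)` by its smallest margin `min |⟪w, x⟫ + b|` over `P ∪ N` gives a
feasible point. The feasible set is closed, and once `‖w‖ ≤ r` the constraints at one point of `P`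
and one point of `N` bound `b` from both sides; so the sublevel sets of `(w, b) ↦ ‖w‖` on the
feasible set are compact and the minimum is attained.
-/

open InnerProductSpace

theorem IsCompact.exists_isMinOn_of_sublevel {α β : Type*} [TopologicalSpace β] [LinearOrder α]
    [TopologicalSpace α] [ClosedIicTopology α] {f : β → α} {s : Set β} {x₀ : β} (hx₀ : x₀ ∈ s)
    (hK : IsCompact (s ∩ f ⁻¹' Set.Iic (f x₀))) (hf : ContinuousOn f s) :
    ∃ x ∈ s, IsMinOn f s x := by
  obtain ⟨x, ⟨hxs, -⟩, hxmin⟩ :=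
    hK.exists_isMinOn ⟨x₀, hx₀, le_rfl⟩ (hf.mono Set.inter_subset_left)
  refine ⟨x, hxs, fun y hys => ?_⟩
  by_cases hy : f y ≤ f x₀
  · exact hxmin ⟨hys, hy⟩
  · exact (hxmin ⟨hx₀, le_rfl⟩).trans (le_of_not_ge hy)

section SVM

variable {E : Type*} [NormedAddCommGroup E] [InnerProductSpace ℝ E]

def svmFeasible (P N : Set E) : Set (E × ℝ) :=
  {p | (∀ x ∈ P, ⟪p.1, x⟫_ℝ + p.2 ≥ 1) ∧ ∀ x ∈ N, ⟪p.1, x⟫_ℝ + p.2 ≤ -1}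

theorem isClosed_svmFeasible (P N : Set E) : IsClosed (svmFeasible P N) := by
  have hcont (x : E) : Continuous fun p : E × ℝ => ⟪p.1, x⟫_ℝ + p.2 := by fun_prop
  simp only [svmFeasible, Set.ofPred_and, Set.ofPred_forall]
  exact (isClosed_biInter fun x _ => isClosed_le continuous_const (hcont x)).inter
    (isClosed_biInter fun x _ => isClosed_le (hcont x) continuous_const)

theorem svmFeasible_nonempty {P N : Set E} (hP : P.Finite) (hN : N.Finite) {w : E} {b : ℝ}
    (hPpos : ∀ x ∈ P, ⟪w, x⟫_ℝ + b > 0) (hNneg : ∀ x ∈ N, ⟪w, x⟫_ℝ + b < 0) :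
    (svmFeasible P N).Nonempty := by
  obtain ⟨m, hm, hmle⟩ : ∃ m, 0 < m ∧ ∀ x ∈ P ∪ N, m ≤ |⟪w, x⟫_ℝ + b| :=
    (hP.union hN).isCompact.exists_forall_le' (by fun_prop : Continuous _).continuousOn
      fun x hx => hx.elim (fun hx => abs_pos_of_pos (hPpos x hx))
        fun hx => abs_pos_of_neg (hNneg x hx)
  have hscale (x : E) : ⟪m⁻¹ • w, x⟫_ℝ + m⁻¹ * b = (⟪w, x⟫_ℝ + b) / m := by
    rw [real_inner_smul_left, div_eq_inv_mul, mul_add]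
  refine ⟨(m⁻¹ • w, m⁻¹ * b), fun x hx => ?_, fun x hx => ?_⟩
  · have := hmle x (Or.inl hx)
    rw [abs_of_pos (hPpos x hx)] at this
    rw [hscale, ge_iff_le, le_div_iff₀ hm, one_mul]
    exact this
  · have := hmle x (Or.inr hx)
    rw [abs_of_neg (hNneg x hx)] at this
    rw [hscale, div_le_iff₀ hm]
    linarith

theorem isBounded_svmFeasible_inter_norm_le {P N : Set E} {x₀ y₀ : E} (hx₀ : x₀ ∈ P)
    (hy₀ : y₀ ∈ N) (r : ℝ) :
    Bornology.IsBounded (svmFeasible P N ∩ (fun p => ‖p.1‖) ⁻¹' Set.Iic r) := by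
  refine ((Metric.isBounded_closedBall (x := (0 : E)) (r := r)).prod
    (Metric.isBounded_Icc (1 - r * ‖x₀‖) (-1 + r * ‖y₀‖))).subset ?_
  rintro ⟨w, b⟩ ⟨⟨hwP, hwN⟩, hw : ‖w‖ ≤ r⟩
  refine ⟨mem_closedBall_zero_iff.mpr hw, ?_, ?_⟩
  · have := hwP x₀ hx₀
    have := (abs_le.mp (abs_real_inner_le_norm w x₀)).2
    have := mul_le_mul_of_nonneg_right hw (norm_nonneg x₀)
    linarith
  · have := hwN y₀ hy₀
    have := (abs_le.mp (abs_real_inner_le_norm w y₀)).1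
    have := mul_le_mul_of_nonneg_right hw (norm_nonneg y₀)
    linarith

theorem isCompact_svmFeasible_inter_norm_le [ProperSpace E] {P N : Set E} {x₀ y₀ : E}
    (hx₀ : x₀ ∈ P) (hy₀ : y₀ ∈ N) (r : ℝ) :
    IsCompact (svmFeasible P N ∩ (fun p => ‖p.1‖) ⁻¹' Set.Iic r) :=
  Metric.isCompact_of_isClosed_isBounded
    ((isClosed_svmFeasible P N).inter (isClosed_Iic.preimage (by fun_prop)))
    (isBounded_svmFeasible_inter_norm_le hx₀ hy₀ r)

end SVM

theorem stmt_10 (n : ℕ) (P N : Set (EuclideanSpace ℝ (Fin n)))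
    (hP : P.Finite) (hN : N.Finite) (hPne : P.Nonempty) (hNne : N.Nonempty)
    (hsep : ∃ (w : EuclideanSpace ℝ (Fin n)) (b : ℝ), w ≠ 0 ∧
      (∀ x ∈ P, ⟪w, x⟫_ℝ + b > 0) ∧ (∀ x ∈ N, ⟪w, x⟫_ℝ + b < 0)) :
    ∃ (w : EuclideanSpace ℝ (Fin n)) (b : ℝ),
      ((∀ x ∈ P, ⟪w, x⟫_ℝ + b ≥ 1) ∧ (∀ x ∈ N, ⟪w, x⟫_ℝ + b ≤ -1)) ∧
      ∀ (w' : EuclideanSpace ℝ (Fin n)) (b' : ℝ),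
        ((∀ x ∈ P, ⟪w', x⟫_ℝ + b' ≥ 1) ∧ (∀ x ∈ N, ⟪w', x⟫_ℝ + b' ≤ -1)) →
        ‖w‖ ^ 2 ≤ ‖w'‖ ^ 2 := by
  obtain ⟨w, b, -, hPpos, hNneg⟩ := hsep
  obtain ⟨x₀, hx₀⟩ := hPne
  obtain ⟨y₀, hy₀⟩ := hNne
  obtain ⟨p₀, hp₀⟩ := svmFeasible_nonempty hP hN hPpos hNneg
  obtain ⟨p, hp, hmin⟩ :=
    (isCompact_svmFeasible_inter_norm_le hx₀ hy₀ ‖p₀.1‖).exists_isMinOn_of_sublevel hp₀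
      (by fun_prop)
  exact ⟨p.1, p.2, hp, fun w' b' h' =>
    pow_le_pow_left₀ (norm_nonneg _) (hmin (a := (w', b')) h') 2⟩
end

section
/- For the hard-margin SVM: if (w*, b*) minimizes ‖w‖² subject to yᵢ(⟨w, xᵢ⟩ + b) ≥ 1 for data points (xᵢ, yᵢ) with yᵢ ∈ {1, -1}, then there exists an index i with yᵢ = 1 and an index j with yⱼ = -1 such that yᵢ(⟨w*, xᵢ⟩ + b*) = 1 and yⱼ(⟨w*, xⱼ⟩ + b*) = 1, provided both labels occur. -/
/-!
If no constraint of one class were active, the two smallest class margins `a` and `c`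
(both `≥ 1`) would satisfy `a + c > 2`. Shifting the offset to balance the two margins at
`s = (a + c) / 2 > 1` and then dividing `(w, b)` by `s` keeps the constraints satisfied while
shrinking `‖w‖` by the factor `s⁻¹ < 1`, contradicting minimality; `w ≠ 0` because both labels
occur.
-/

open InnerProductSpace

open Filter Topology

theorem exists_gt_forall_le_of_finite {ι α : Type*} [Finite ι] [LinearOrder α] [TopologicalSpace α]
    [OrderTopology α] [DenselyOrdered α] [NoMaxOrder α] {p : ι → Prop} {g : ι → α} {r : α}
    (h : ∀ i, p i → r < g i) : ∃ a, r < a ∧ ∀ i, p i → a ≤ g i := by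
  have hnear : ∀ᶠ a in 𝓝 r, ∀ i, p i → a ≤ g i :=
    eventually_all.2 fun i => eventually_imp_distrib_left.2 fun hi =>
      eventually_le_nhds (h i hi)
  have hright : ∀ᶠ a in 𝓝[>] r, r < a ∧ ∀ i, p i → a ≤ g i :=
    (eventually_nhdsWithin_of_forall fun _ hra => hra).and (nhdsWithin_le_nhds hnear)
  exact hright.exists

section HardMargin

variable {ι E : Type*} [NormedAddCommGroup E] [InnerProductSpace ℝ E]
  {x : ι → E} {y : ι → ℝ} {w : E} {b : ℝ}

def MarginFeasible (x : ι → E) (y : ι → ℝ) (w : E) (b : ℝ) : Prop :=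
  ∀ i, y i * (⟪w, x i⟫_ℝ + b) ≥ 1

theorem MarginFeasible.ne_zero (h : MarginFeasible x y w b) {i j : ι} (hi : y i = 1)
    (hj : y j = -1) : w ≠ 0 := by
  rintro rfl
  have hi' := h i
  have hj' := h j
  simp only [hi, hj, inner_zero_left, zero_add] at hi' hj'
  linarith

theorem MarginFeasible.of_margin_bounds (hy : ∀ i, y i = 1 ∨ y i = -1) {a c : ℝ}
    (ha : ∀ i, y i = 1 → a ≤ ⟪w, x i⟫_ℝ + b) (hc : ∀ j, y j = -1 → c ≤ -(⟪w, x j⟫_ℝ + b))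
    (hac : 0 < a + c) :
    MarginFeasible x y (((a + c) / 2)⁻¹ • w) (((a + c) / 2)⁻¹ * (b + (c - a) / 2)) := by
  intro i
  have hs : 0 < (a + c) / 2 := half_pos hac
  rw [real_inner_smul_left, ← mul_add, mul_left_comm, ← div_eq_inv_mul, ge_iff_le,
    le_div_iff₀ hs, one_mul]
  rcases hy i with h | h
  · rw [h]
    linarith [ha i h]
  · rw [h]
    linarith [hc i h]

theorem add_le_two_of_margin_bounds (hy : ∀ i, y i = 1 ∨ y i = -1)
    (hmin : ∀ w' b', MarginFeasible x y w' b' → ‖w‖ ^ 2 ≤ ‖w'‖ ^ 2) (hw : w ≠ 0) {a c : ℝ}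
    (ha : ∀ i, y i = 1 → a ≤ ⟪w, x i⟫_ℝ + b) (hc : ∀ j, y j = -1 → c ≤ -(⟪w, x j⟫_ℝ + b)) :
    a + c ≤ 2 := by
  by_contra! hac
  have hs : 1 < (a + c) / 2 := by linarith
  have hshrink : ‖((a + c) / 2)⁻¹ • w‖ < ‖w‖ := by
    rw [norm_smul, norm_inv, Real.norm_of_nonneg (by linarith)]
    exact mul_lt_of_lt_one_left (norm_pos_iff.2 hw) (inv_lt_one_of_one_lt₀ hs)
  exact (pow_lt_pow_left₀ hshrink (norm_nonneg _) two_ne_zero).not_ge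
    (hmin _ _ (.of_margin_bounds hy ha hc (by linarith)))

end HardMargin

theorem stmt_11 (n : ℕ) (ι : Type*) [Finite ι]
    (x : ι → EuclideanSpace ℝ (Fin n)) (y : ι → ℝ)
    (hy : ∀ i, y i = 1 ∨ y i = -1)
    (hpos : ∃ i, y i = 1) (hneg : ∃ j, y j = -1)
    (w : EuclideanSpace ℝ (Fin n)) (b : ℝ)
    (hfeas : ∀ i, y i * (⟪w, x i⟫_ℝ + b) ≥ 1)
    (hmin : ∀ (w' : EuclideanSpace ℝ (Fin n)) (b' : ℝ),
      (∀ i, y i * (⟪w', x i⟫_ℝ + b') ≥ 1) → ‖w‖ ^ 2 ≤ ‖w'‖ ^ 2) :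
    ∃ i j, y i = 1 ∧ y j = -1 ∧
      y i * (⟪w, x i⟫_ℝ + b) = 1 ∧ y j * (⟪w, x j⟫_ℝ + b) = 1 := by
  obtain ⟨i₀, hi₀⟩ := hpos
  obtain ⟨j₀, hj₀⟩ := hneg
  have hw : w ≠ 0 := MarginFeasible.ne_zero hfeas hi₀ hj₀
  have hpos_ge : ∀ i, y i = 1 → 1 ≤ ⟪w, x i⟫_ℝ + b := fun i hi => by
    simpa [hi] using hfeas i
  have hneg_ge : ∀ j, y j = -1 → 1 ≤ -(⟪w, x j⟫_ℝ + b) := fun j hj => by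
    simpa [hj] using hfeas j
  obtain ⟨i, hi, hi_active⟩ : ∃ i, y i = 1 ∧ ⟪w, x i⟫_ℝ + b = 1 := by
    by_contra! hslack
    obtain ⟨a, ha, ha_le⟩ := exists_gt_forall_le_of_finite fun i hi =>
      (hpos_ge i hi).lt_of_ne (hslack i hi).symm
    linarith [add_le_two_of_margin_bounds hy hmin hw ha_le hneg_ge]
  obtain ⟨j, hj, hj_active⟩ : ∃ j, y j = -1 ∧ -(⟪w, x j⟫_ℝ + b) = 1 := by
    by_contra! hslack
    obtain ⟨c, hc, hc_le⟩ := exists_gt_forall_le_of_finite fun j hj =>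
      (hneg_ge j hj).lt_of_ne (hslack j hj).symm
    linarith [add_le_two_of_margin_bounds hy hmin hw hpos_ge hc_le]
  exact ⟨i, j, hi, hj, by rw [hi, hi_active, one_mul], by rw [hj, neg_one_mul, hj_active]⟩
end
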